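/- For all finite sets Φ ∪ {χ} of Łukasiewicz formulas in L^Q_Ł, Φ ⊨_Ł χ if and only if Φ^Pr ⊨_FP χ^Pr. -/
import Mathlib


open scoped Classical

/-- Classical propositional formulas (the language `L_CPL`), built from
propositional variables (indexed by `ℕ`) using ¬, ∧, ∨. -/
inductive CPL where
  | var : ℕ → CPL
  | neg : CPL → CPL
  | and : CPL → CPL → CPL
  | or : CPL → CPL → CPL
deriving DecidableEq

namespace CPL

/-- The set of propositional variables occurring in a formula. -/
def vars : CPL → Finset ℕ
  | var p => {p}
  | neg φ => vars φ
  | and φ χ => vars φ ∪ vars χ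
  | or φ χ => vars φ ∪ vars χ

/-- Classical evaluation of a formula under a Boolean valuation. -/
def eval (v : ℕ → Bool) : CPL → Bool
  | var p => v p
  | neg φ => !eval v φ
  | and φ χ => eval v φ && eval v χ
  | or φ χ => eval v φ || eval v χ

/-- Evaluation of a formula at a state given as a set of variables:
the variables in `X` are true, all others false. -/
def evalSet (X : Finset ℕ) (φ : CPL) : Bool := eval (fun p => decide (p ∈ X)) φ

/-- CPL-satisfiability. -/
def Satisfiable (φ : CPL) : Prop := ∃ v, eval v φ = true

/-- CPL-validity. -/
def Valid (φ : CPL) : Prop := ∀ v, eval v φ = true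

/-- Classical entailment `φ ⊨_CPL χ`. -/
def Entails (φ χ : CPL) : Prop := ∀ v, eval v φ = true → eval v χ = true

/-- A literal: a variable or a negated variable. -/
def IsLiteral (φ : CPL) : Prop := (∃ p, φ = var p) ∨ ∃ p, φ = neg (var p)

/-- An `L_CPL`-term: a conjunction of literals. -/
inductive IsTerm : CPL → Prop
  | lit {φ} : IsLiteral φ → IsTerm φ
  | conj {φ χ} : IsTerm φ → IsTerm χ → IsTerm (and φ χ)

/-- A conjunction of propositional variables. -/
inductive IsConjVars : CPL → Prop
  | var (p : ℕ) : IsConjVars (var p)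
  | conj {φ χ} : IsConjVars φ → IsConjVars χ → IsConjVars (and φ χ)

/-- A disjunction of propositional variables. -/
inductive IsDisjVars : CPL → Prop
  | var (p : ℕ) : IsDisjVars (var p)
  | disj {φ χ} : IsDisjVars φ → IsDisjVars χ → IsDisjVars (or φ χ)

/-- Variables occurring as positive literals (in a term). -/
def posVars : CPL → Finset ℕ
  | var p => {p}
  | neg _ => ∅
  | and φ χ => posVars φ ∪ posVars χ
  | or _ _ => ∅

/-- Variables occurring as negated literals (in a term). -/
def negVars : CPL → Finset ℕ
  | var _ => ∅
  | neg (var p) => {p}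
  | neg _ => ∅
  | and φ χ => negVars φ ∪ negVars χ
  | or _ _ => ∅

/-- The literals occurring in a term. -/
def lits (φ : CPL) : Finset CPL :=
  (posVars φ).image var ∪ (negVars φ).image (fun p => neg (var p))

end CPL

/-- A state (possible world) over a finite set `V` of variables: a subset of `V`. -/
abbrev World (V : Finset ℕ) := {X : Finset ℕ // X ⊆ V}

/-- A probabilistic model for `V`: a finitely additive probability measure
`μ : 2^(2^V) → [0,1]`. -/
structure ProbModel (V : Finset ℕ) where
  μ : Set (World V) → ℝ
  nonneg : ∀ A, 0 ≤ μ A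
  le_one : ∀ A, μ A ≤ 1
  m_univ : μ Set.univ = 1
  m_empty : μ ∅ = 0
  m_add : ∀ A B : Set (World V), Disjoint A B → μ (A ∪ B) = μ A + μ B

/-- The truth set `‖φ‖_M` of a classical formula in a probabilistic model for `V`. -/
def truthSet (V : Finset ℕ) (φ : CPL) : Set (World V) :=
  {w | CPL.evalSet w.1 φ = true}

/-- Comparison symbols ◇ ∈ {≤, <, >, ≥}. -/
inductive Ineq where
  | le | lt | gt | ge
deriving DecidableEq

/-- The relation denoted by a comparison symbol. -/
def Ineq.holds : Ineq → ℝ → ℝ → Prop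
  | le, x, c => x ≤ c
  | lt, x, c => x < c
  | gt, x, c => x > c
  | ge, x, c => x ≥ c

/-- Formulas of the probabilistic language `L^Q_Pr`, built from probabilistic atoms
`Pr(φ)` and `Pr(φ)◇c̄` using ¬, △, ⊙, ⊕, →. -/
inductive FP where
  | prob : CPL → FP
  | probIneq : CPL → Ineq → ℚ → FP
  | neg : FP → FP
  | delta : FP → FP
  | conj : FP → FP → FP
  | disj : FP → FP → FP
  | impl : FP → FP → FP
deriving DecidableEq

namespace FP

/-- Well-formedness: all rational constants lie in `[0,1] ∩ ℚ`. -/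
def WF : FP → Prop
  | prob _ => True
  | probIneq _ _ c => 0 ≤ c ∧ c ≤ 1
  | neg α => WF α
  | delta α => WF α
  | conj α β => WF α ∧ WF β
  | disj α β => WF α ∧ WF β
  | impl α β => WF α ∧ WF β

/-- The variables of an `L^Q_Pr`-formula. -/
def vars : FP → Finset ℕ
  | prob φ => φ.vars
  | probIneq φ _ _ => φ.vars
  | neg α => vars α
  | delta α => vars α
  | conj α β => vars α ∪ vars β
  | disj α β => vars α ∪ vars β
  | impl α β => vars α ∪ vars β

/-- The events `E(α)`: the classical formulas occurring in probabilistic atoms of `α`. -/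
def events : FP → Finset CPL
  | prob φ => {φ}
  | probIneq φ _ _ => {φ}
  | neg α => events α
  | delta α => events α
  | conj α β => events α ∪ events β
  | disj α β => events α ∪ events β
  | impl α β => events α ∪ events β

/-- The FP-interpretation `I_M` induced by a probabilistic model `M`. -/
noncomputable def interp {V : Finset ℕ} (M : ProbModel V) : FP → ℝ
  | prob φ => M.μ (truthSet V φ)
  | probIneq φ d c => if d.holds (M.μ (truthSet V φ)) (c : ℝ) then 1 else 0
  | neg α => 1 - interp M α
  | delta α => if interp M α = 1 then 1 else 0
  | conj α β => max 0 (interp M α + interp M β - 1)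
  | disj α β => min 1 (interp M α + interp M β)
  | impl α β => min 1 (1 - interp M α + interp M β)

/-- `α` is FP-satisfiable: `I_M(α) = 1` in some probabilistic model for `Var(α)`. -/
def Satisfiable (α : FP) : Prop := ∃ M : ProbModel α.vars, interp M α = 1

/-- `α` is FP-valid: `I_M(α) = 1` in every probabilistic model for `Var(α)`. -/
def Valid (α : FP) : Prop := ∀ M : ProbModel α.vars, interp M α = 1

/-- `α ⊨_FP β`: `I_M(β) = 1` in every probabilistic model for the variables of
`{α, β}` with `I_M(α) = 1`. -/
def Entails1 (α β : FP) : Prop :=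
  ∀ M : ProbModel (α.vars ∪ β.vars), interp M α = 1 → interp M β = 1

/-- The variables of a finite set of `L^Q_Pr`-formulas. -/
def varsSet (Γ : Finset FP) : Finset ℕ := Γ.sup vars

/-- A finite set `Γ` is FP-satisfiable (`Γ ⊭_FP ⊥`): some probabilistic model for
the variables of `Γ` makes every member of `Γ` equal to `1`. -/
def SetSatisfiable (Γ : Finset FP) : Prop :=
  ∃ M : ProbModel (varsSet Γ), ∀ γ ∈ Γ, interp M γ = 1

/-- `Γ ⊨_FP δ`: every probabilistic model for the variables of `Γ ∪ {δ}` satisfying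
all of `Γ` satisfies `δ`. -/
def EntailsFin (Γ : Finset FP) (δ : FP) : Prop :=
  ∀ M : ProbModel (varsSet Γ ∪ δ.vars), (∀ γ ∈ Γ, interp M γ = 1) → interp M δ = 1

/-- `Γ ⊨^cons_FP δ`: `Γ ⊨_FP δ` and `Γ ⊭_FP ⊥`. -/
def ConsEntails (Γ : Finset FP) (δ : FP) : Prop :=
  EntailsFin Γ δ ∧ SetSatisfiable Γ

/-- The set of permitted values `V_Pr(Pr(φ)◇c̄)`. -/
def permittedValues (φ : CPL) (d : Ineq) (c : ℚ) : Set ℝ :=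
  {x | ∃ (V : Finset ℕ) (M : ProbModel V), φ.vars ⊆ V ∧
      interp M (probIneq φ d c) = 1 ∧ M.μ (truthSet V φ) = x}

end FP

/-- Formulas of the Łukasiewicz language `L^Q_Ł`, built from propositional variables
and truth-constant literals `p◇c̄` using ¬, △, ⊙, ⊕, →. -/
inductive Luk where
  | var : ℕ → Luk
  | ineq : ℕ → Ineq → ℚ → Luk
  | neg : Luk → Luk
  | delta : Luk → Luk
  | conj : Luk → Luk → Luk
  | disj : Luk → Luk → Luk
  | impl : Luk → Luk → Luk
deriving DecidableEq

/-- An Ł-valuation: a function `Var → [0,1]`. -/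
structure LukVal where
  v : ℕ → ℝ
  mem : ∀ p, v p ∈ Set.Icc (0 : ℝ) 1

/-- Extension of an Ł-valuation to all `L^Q_Ł`-formulas. -/
noncomputable def LukVal.eval (val : LukVal) : Luk → ℝ
  | .var p => val.v p
  | .ineq p d c => if d.holds (val.v p) (c : ℝ) then 1 else 0
  | .neg φ => 1 - val.eval φ
  | .delta φ => if val.eval φ = 1 then 1 else 0
  | .conj φ χ => max 0 (val.eval φ + val.eval χ - 1)
  | .disj φ χ => min 1 (val.eval φ + val.eval χ)
  | .impl φ χ => min 1 (1 - val.eval φ + val.eval χ)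

namespace Luk

/-- Well-formedness: all rational constants lie in `[0,1] ∩ ℚ`. -/
def WF : Luk → Prop
  | var _ => True
  | ineq _ _ c => 0 ≤ c ∧ c ≤ 1
  | neg φ => WF φ
  | delta φ => WF φ
  | conj φ χ => WF φ ∧ WF χ
  | disj φ χ => WF φ ∧ WF χ
  | impl φ χ => WF φ ∧ WF χ

/-- `Φ ⊨_Ł χ` for a finite set `Φ`. -/
def EntailsFin (Φ : Finset Luk) (χ : Luk) : Prop :=
  ∀ val : LukVal, (∀ φ ∈ Φ, val.eval φ = 1) → val.eval χ = 1

/-- `φ` is Ł-valid. -/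
def ValidL (φ : Luk) : Prop := ∀ val : LukVal, val.eval φ = 1

/-- A set of `L^Q_Ł`-formulas is Ł-satisfiable. -/
def SatisfiableSet (S : Set Luk) : Prop := ∃ val : LukVal, ∀ φ ∈ S, val.eval φ = 1

/-- The probabilistic counterpart `φ^Pr` of a Łukasiewicz formula. -/
def toFP : Luk → FP
  | var p => .prob (.var p)
  | ineq p d c => .probIneq (.var p) d c
  | neg φ => .neg (toFP φ)
  | delta φ => .delta (toFP φ)
  | conj φ χ => .conj (toFP φ) (toFP χ)
  | disj φ χ => .disj (toFP φ) (toFP χ)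
  | impl φ χ => .impl (toFP φ) (toFP χ)

end Luk

namespace FP

/-- The outer counterpart `α^↑` of an `L^Q_Pr`-formula, replacing each atom `Pr(φ)`
by the fresh variable `e φ` (and `Pr(φ)◇c̄` by `(e φ)◇c̄`). -/
def outer (e : CPL → ℕ) : FP → Luk
  | prob φ => .var (e φ)
  | probIneq φ d c => .ineq (e φ) d c
  | neg α => .neg (outer e α)
  | delta α => .delta (outer e α)
  | conj α β => .conj (outer e α) (outer e β)
  | disj α β => .disj (outer e α) (outer e β)
  | impl α β => .impl (outer e α) (outer e β)

end FP

/-- The ⊙-conjunction of a (nonempty) list of `L^Q_Pr`-formulas. -/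
def bigConjFP : List FP → FP
  | [] => .probIneq (.var 0) .ge 0
  | a :: t => t.foldl .conj a

/-- The ∨-disjunction of a (nonempty) list of classical formulas. -/
def bigDisjCPL : List CPL → CPL
  | [] => .var 0
  | a :: t => t.foldl .or a

/-- The PIT `⊙_i Pr(τ_i)≤c̄_i ⊙ ⊙_i Pr(τ_i)≥c̄_i` associated with the list of
pairs `(τ_i, c_i)`. -/
def completePITFormula (L : List (CPL × ℚ)) : FP :=
  bigConjFP (L.map (fun t => FP.probIneq t.1 .le t.2) ++
             L.map (fun t => FP.probIneq t.1 .ge t.2))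

/-- `τ` is an `L_CPL`-term containing, for every `p ∈ V`, exactly one of the
literals `p` and `¬p` (and no other variables). -/
def IsCompleteTermOver (V : Finset ℕ) (τ : CPL) : Prop :=
  CPL.IsTerm τ ∧ τ.vars ⊆ V ∧ ∀ p ∈ V, (p ∈ τ.posVars ↔ p ∉ τ.negVars)

/-- Membership in `𝒱 = {0, 1/n, …, (n−1)/n, 1}`. -/
def memVSet (n : ℕ) (c : ℚ) : Prop := ∃ k : ℕ, k ≤ n ∧ c = (k : ℚ) / (n : ℚ)

/-- The data `(τ_i, c_i)` of a `⟨V,𝒱⟩`-complete PIT (with `𝒱` given by `n`). -/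
def IsCompletePIT (V : Finset ℕ) (n : ℕ) (L : List (CPL × ℚ)) : Prop :=
  (L.map Prod.fst).Nodup ∧
  (∀ t ∈ L, IsCompleteTermOver V t.1 ∧ memVSet n t.2) ∧
  (L.map Prod.snd).sum = 1

/-- A measure is coherent with a value assignment `pr` on the events `E`. -/
def coherent {V : Finset ℕ} (M : ProbModel V) (E : Finset CPL) (pr : CPL → ℚ) : Prop :=
  ∀ ψ ∈ E, M.μ (truthSet V ψ) = (pr ψ : ℝ)

/-- Conditional probability `Pr_μ(φ | χ) = μ(‖φ∧χ‖)/μ(‖χ‖)`. -/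
noncomputable def condProb {V : Finset ℕ} (M : ProbModel V) (φ χ : CPL) : ℝ :=
  M.μ (truthSet V (CPL.and φ χ)) / M.μ (truthSet V χ)

/-- `τ` is a solution to the PrAP `⟨{φ}, χ, H, E, pr⟩`: an `L_CPL`-term composed of
literals from `H` s.t. `φ, τ ⊨_CPL χ` and some probabilistic model coherent with `pr`
gives `μ(‖φ∧τ‖) > 0`. -/
def IsPrAPSolution (φ χ : CPL) (H E : Finset CPL) (pr : CPL → ℚ) (τ : CPL) : Prop :=
  CPL.IsTerm τ ∧ τ.lits ⊆ H ∧
  (∀ v, CPL.eval v φ = true → CPL.eval v τ = true → CPL.eval v χ = true) ∧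
  ∃ M : ProbModel (φ.vars ∪ χ.vars),
    coherent M E pr ∧ 0 < M.μ (truthSet (φ.vars ∪ χ.vars) (CPL.and φ τ))

/-- `τ` is a preferred solution: a solution s.t. for every other solution `σ` there is
a probabilistic model coherent with `pr` with `μ(‖τ‖) ≥ μ(‖σ‖)`. -/
def IsPreferredPrAPSolution (φ χ : CPL) (H E : Finset CPL) (pr : CPL → ℚ) (τ : CPL) : Prop :=
  IsPrAPSolution φ χ H E pr τ ∧
  ∀ σ, IsPrAPSolution φ χ H E pr σ → σ ≠ τ →
    ∃ M : ProbModel (φ.vars ∪ χ.vars),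
      coherent M E pr ∧
      M.μ (truthSet (φ.vars ∪ χ.vars) σ) ≤ M.μ (truthSet (φ.vars ∪ χ.vars) τ)

/-- The FP-counterpart `Ξ_p = {Pr(ψ)≈c̄ : ψ ∈ E, p(ψ) = c}` of a value assignment,
where `Pr(ψ)≈c̄` abbreviates `(Pr(ψ)≥c̄) ⊙ (Pr(ψ)≤c̄)`. -/
def XiP (E : Finset CPL) (pr : CPL → ℚ) : Finset FP :=
  E.image (fun ψ => FP.conj (FP.probIneq ψ .ge (pr ψ)) (FP.probIneq ψ .le (pr ψ)))

/-- The next weakest PIL `λ^♭_𝒱` of the PIL `Pr(τ)◇(k/n)`. -/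
def flatPIL (n : ℕ) (τ : CPL) (d : Ineq) (k : ℕ) : FP :=
  match d with
  | .ge => FP.probIneq τ .gt (((k : ℚ) - 1) / (n : ℚ))
  | .gt => FP.probIneq τ .ge ((k : ℚ) / (n : ℚ))
  | .le => FP.probIneq τ .lt (((k : ℚ) + 1) / (n : ℚ))
  | .lt => FP.probIneq τ .le ((k : ℚ) / (n : ℚ))

/-- The theory `Ψ_Γ = Γ^↑ ∪ {p_φ → p_χ : φ, χ ∈ E[Γ], φ ⊨_CPL χ}`. -/
def PsiGamma (Γ : Finset FP) (e : CPL → ℕ) : Set Luk :=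
  (fun α => FP.outer e α) '' (↑Γ : Set FP) ∪
  {ψ | ∃ φ ∈ Γ.sup FP.events, ∃ χ ∈ Γ.sup FP.events,
        CPL.Entails φ χ ∧ ψ = Luk.impl (.var (e φ)) (.var (e χ))}

/-- The conjunction `hd ∧ ⋀_{q ∈ s} q`. -/
def conjVarsFrom (hd : CPL) (s : Finset ℕ) : CPL :=
  (s.sort (· ≤ ·)).foldl (fun acc q => CPL.and acc (CPL.var q)) hd
section Aux

/-- Product-measure weight of a state `X` over variable set `V`. -/
noncomputable def wgt (V : Finset ℕ) (f : ℕ → ℝ) (X : Finset ℕ) : ℝ :=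
  ∏ q ∈ V, (if q ∈ X then f q else 1 - f q)

lemma wgt_nonneg {V : Finset ℕ} {f : ℕ → ℝ} (hf : ∀ p, f p ∈ Set.Icc (0:ℝ) 1)
    (X : Finset ℕ) : 0 ≤ wgt V f X := by
  refine Finset.prod_nonneg fun q _ => ?_
  by_cases h : q ∈ X
  · simpa [h] using (hf q).1
  · simp only [h, if_false]
    linarith [(hf q).2]

lemma wgt_insert_not_mem {f : ℕ → ℝ} {a : ℕ} {s X : Finset ℕ} (ha : a ∉ s) (haX : a ∉ X) :
    wgt (insert a s) f X = (1 - f a) * wgt s f X := by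
  rw [wgt, Finset.prod_insert ha, if_neg haX]; rfl

lemma wgt_insert_mem {f : ℕ → ℝ} {a : ℕ} {s X : Finset ℕ} (ha : a ∉ s) :
    wgt (insert a s) f (insert a X) = f a * wgt s f X := by
  rw [wgt, Finset.prod_insert ha, if_pos (Finset.mem_insert_self a X)]
  congr 1
  refine Finset.prod_congr rfl fun q hq => ?_
  have hqa : q ≠ a := fun h => ha (h ▸ hq)
  simp [Finset.mem_insert, hqa]

lemma wgt_sum (f : ℕ → ℝ) :
    ∀ V : Finset ℕ, ∑ X ∈ V.powerset, wgt V f X = 1 := by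
  intro V
  induction V using Finset.induction_on with
  | empty => simp [wgt]
  | @insert a s ha ih =>
    rw [Finset.sum_powerset_insert ha]
    have h1 : ∑ X ∈ s.powerset, wgt (insert a s) f X
        = (1 - f a) * ∑ X ∈ s.powerset, wgt s f X := by
      rw [Finset.mul_sum]
      refine Finset.sum_congr rfl fun X hX => ?_
      exact wgt_insert_not_mem ha (fun h => ha (Finset.mem_powerset.mp hX h))
    have h2 : ∑ X ∈ s.powerset, wgt (insert a s) f (insert a X)
        = f a * ∑ X ∈ s.powerset, wgt s f X := by
      rw [Finset.mul_sum]
      exact Finset.sum_congr rfl fun X hX => wgt_insert_mem ha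
    rw [h1, h2, ih]; ring

lemma wgt_marg (f : ℕ → ℝ) :
    ∀ V : Finset ℕ, ∀ p ∈ V,
      ∑ X ∈ V.powerset, (if p ∈ X then (1:ℝ) else 0) * wgt V f X = f p := by
  intro V
  induction V using Finset.induction_on with
  | empty => simp
  | @insert a s ha ih =>
    intro p hp
    rw [Finset.sum_powerset_insert ha]
    by_cases hpa : p = a
    · subst hpa
      have h1 : ∑ X ∈ s.powerset, (if p ∈ X then (1:ℝ) else 0) * wgt (insert p s) f X = 0 := by
        refine Finset.sum_eq_zero fun X hX => ?_
        have : p ∉ X := fun h => ha (Finset.mem_powerset.mp hX h)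
        simp [this]
      have h2 : ∑ X ∈ s.powerset,
          (if p ∈ insert p X then (1:ℝ) else 0) * wgt (insert p s) f (insert p X)
          = f p * ∑ X ∈ s.powerset, wgt s f X := by
        rw [Finset.mul_sum]
        refine Finset.sum_congr rfl fun X hX => ?_
        rw [if_pos (Finset.mem_insert_self p X), wgt_insert_mem ha, one_mul]
      rw [h1, h2, wgt_sum]; ring
    · have hps : p ∈ s := by
        rcases Finset.mem_insert.mp hp with h | h
        · exact absurd h hpa
        · exact h
      have h1 : ∑ X ∈ s.powerset, (if p ∈ X then (1:ℝ) else 0) * wgt (insert a s) f X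
          = (1 - f a) * ∑ X ∈ s.powerset, (if p ∈ X then (1:ℝ) else 0) * wgt s f X := by
        rw [Finset.mul_sum]
        refine Finset.sum_congr rfl fun X hX => ?_
        rw [wgt_insert_not_mem ha (fun h => ha (Finset.mem_powerset.mp hX h))]; ring
      have h2 : ∑ X ∈ s.powerset,
          (if p ∈ insert a X then (1:ℝ) else 0) * wgt (insert a s) f (insert a X)
          = f a * ∑ X ∈ s.powerset, (if p ∈ X then (1:ℝ) else 0) * wgt s f X := by
        rw [Finset.mul_sum]
        refine Finset.sum_congr rfl fun X hX => ?_
        rw [wgt_insert_mem ha]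
        have : p ∈ insert a X ↔ p ∈ X := by simp [Finset.mem_insert, hpa]
        rw [if_congr this rfl rfl]; ring
      rw [h1, h2, ih p hps]; ring

/-- There is a probabilistic model over `V` whose marginals on variables in `V`
are prescribed by `f`. -/
lemma exists_probModel (V : Finset ℕ) (f : ℕ → ℝ) (hf : ∀ p, f p ∈ Set.Icc (0:ℝ) 1) :
    ∃ M : ProbModel V, ∀ p ∈ V, M.μ (truthSet V (CPL.var p)) = f p := by
  classical
  set μ : Set (World V) → ℝ := fun A =>
    ∑ X ∈ V.powerset, if h : X ⊆ V then (if (⟨X, h⟩ : World V) ∈ A then wgt V f X else 0) else 0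
    with hμ
  have key : ∀ A : Set (World V),
      μ A = ∑ X ∈ V.powerset,
        (if h : X ⊆ V then (if (⟨X, h⟩ : World V) ∈ A then wgt V f X else 0) else 0) := fun A => rfl
  have huniv : μ Set.univ = 1 := by
    rw [key]
    rw [Finset.sum_congr rfl fun X hX => by
      rw [dif_pos (Finset.mem_powerset.mp hX), if_pos (Set.mem_univ _)]]
    exact wgt_sum f V
  have hnn : ∀ A, 0 ≤ μ A := by
    intro A
    refine Finset.sum_nonneg fun X hX => ?_
    rw [dif_pos (Finset.mem_powerset.mp hX)]
    split
    · exact wgt_nonneg hf X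
    · exact le_refl 0
  refine ⟨⟨μ, hnn, ?_, huniv, ?_, ?_⟩, ?_⟩
  · intro A
    rw [← huniv, key, key]
    refine Finset.sum_le_sum fun X hX => ?_
    rw [dif_pos (Finset.mem_powerset.mp hX), dif_pos (Finset.mem_powerset.mp hX),
      if_pos (Set.mem_univ _)]
    split
    · exact le_refl _
    · exact wgt_nonneg hf X
  · rw [key]
    refine Finset.sum_eq_zero fun X hX => ?_
    rw [dif_pos (Finset.mem_powerset.mp hX)]
    simp
  · intro A B hAB
    rw [key, key, key, ← Finset.sum_add_distrib]
    refine Finset.sum_congr rfl fun X hX => ?_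
    have hXV := Finset.mem_powerset.mp hX
    rw [dif_pos hXV, dif_pos hXV, dif_pos hXV]
    by_cases hA : (⟨X, hXV⟩ : World V) ∈ A
    · have hB : (⟨X, hXV⟩ : World V) ∉ B := fun hB => (Set.disjoint_left.mp hAB hA) hB
      simp [hA, hB, Set.mem_union]
    · by_cases hB : (⟨X, hXV⟩ : World V) ∈ B <;> simp [hA, hB, Set.mem_union]
  · intro p hp
    show μ _ = f p
    rw [key]
    rw [Finset.sum_congr rfl fun X hX => by
      rw [dif_pos (Finset.mem_powerset.mp hX)]
      show _ = (if p ∈ X then (1:ℝ) else 0) * wgt V f X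
      by_cases hpX : p ∈ X
      · rw [if_pos, if_pos hpX, one_mul]
        simp [truthSet, CPL.evalSet, CPL.eval, hpX]
      · rw [if_neg, if_neg hpX, zero_mul]
        simp [truthSet, CPL.evalSet, CPL.eval, hpX]]
    exact wgt_marg f V p hp

lemma interp_eq_eval {V : Finset ℕ} (M : ProbModel V) (val : LukVal) :
    ∀ φ : Luk, (∀ p ∈ (Luk.toFP φ).vars, M.μ (truthSet V (CPL.var p)) = val.v p) →
      FP.interp M (Luk.toFP φ) = val.eval φ := by
  intro φ
  induction φ with
  | var p =>
    intro h
    exact h p (by simp [Luk.toFP, FP.vars, CPL.vars])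
  | ineq p d c =>
    intro h
    have := h p (by simp [Luk.toFP, FP.vars, CPL.vars])
    simp [Luk.toFP, FP.interp, LukVal.eval, this]
  | neg φ ih =>
    intro h
    simp only [Luk.toFP, FP.interp, LukVal.eval, ih h]
  | delta φ ih =>
    intro h
    simp only [Luk.toFP, FP.interp, LukVal.eval, ih h]
  | conj φ χ ih1 ih2 =>
    intro h
    have h1 := ih1 fun p hp => h p (by simp [Luk.toFP, FP.vars, Finset.mem_union, hp])
    have h2 := ih2 fun p hp => h p (by simp [Luk.toFP, FP.vars, Finset.mem_union, hp])
    simp only [Luk.toFP, FP.interp, LukVal.eval, h1, h2]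
  | disj φ χ ih1 ih2 =>
    intro h
    have h1 := ih1 fun p hp => h p (by simp [Luk.toFP, FP.vars, Finset.mem_union, hp])
    have h2 := ih2 fun p hp => h p (by simp [Luk.toFP, FP.vars, Finset.mem_union, hp])
    simp only [Luk.toFP, FP.interp, LukVal.eval, h1, h2]
  | impl φ χ ih1 ih2 =>
    intro h
    have h1 := ih1 fun p hp => h p (by simp [Luk.toFP, FP.vars, Finset.mem_union, hp])
    have h2 := ih2 fun p hp => h p (by simp [Luk.toFP, FP.vars, Finset.mem_union, hp])
    simp only [Luk.toFP, FP.interp, LukVal.eval, h1, h2]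

end Aux

/-- For all finite sets `Φ ∪ {χ}` of Łukasiewicz formulas in `L^Q_Ł`,
`Φ ⊨_Ł χ` iff `Φ^Pr ⊨_FP χ^Pr`. -/
theorem stmt0 (Φ : Finset Luk) (χ : Luk) (hΦ : ∀ φ ∈ Φ, φ.WF) (hχ : χ.WF) :
    Luk.EntailsFin Φ χ ↔ FP.EntailsFin (Φ.image Luk.toFP) (Luk.toFP χ) := by
  constructor
  · intro hL M hG
    have hmem : ∀ p, M.μ (truthSet _ (CPL.var p)) ∈ Set.Icc (0:ℝ) 1 :=
      fun p => ⟨M.nonneg _, M.le_one _⟩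
    let val : LukVal := ⟨fun p => M.μ (truthSet _ (CPL.var p)), hmem⟩
    have key : ∀ φ : Luk, FP.interp M (Luk.toFP φ) = val.eval φ :=
      fun φ => interp_eq_eval M val φ (fun p _ => rfl)
    rw [key χ]
    apply hL val
    intro φ hφ
    rw [← key φ]
    exact hG _ (Finset.mem_image_of_mem _ hφ)
  · intro hFP val hval
    obtain ⟨M, hM⟩ := exists_probModel
      (FP.varsSet (Φ.image Luk.toFP) ∪ (Luk.toFP χ).vars) val.v val.mem
    have key : ∀ φ : Luk, (Luk.toFP φ).vars ⊆ FP.varsSet (Φ.image Luk.toFP) ∪ (Luk.toFP χ).vars →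
        FP.interp M (Luk.toFP φ) = val.eval φ :=
      fun φ hsub => interp_eq_eval M val φ (fun p hp => hM p (hsub hp))
    rw [← key χ Finset.subset_union_right]
    apply hFP M
    intro γ hγ
    obtain ⟨φ, hφ, rfl⟩ := Finset.mem_image.mp hγ
    have hsub : (Luk.toFP φ).vars ⊆ FP.varsSet (Φ.image Luk.toFP) ∪ (Luk.toFP χ).vars :=
      Finset.Subset.trans (Finset.le_sup (Finset.mem_image_of_mem _ hφ)) Finset.subset_union_left
    rw [key φ hsub]
    exact hval φ hφ
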